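/- For d = 2 and ε > 1 - 1/(2log₂(3/2)) (with ε < 1), R(δ) = h_b(δ)/(2δ + 1/(1-ε)) is strictly increasing on (0, 1/3], and hence max over δ ∈ [0,1/3] of R(δ) equals R(1/3). -/

import Mathlib

/-- Binary entropy function (base 2), with the convention `0 * log 0 = 0`. -/
noncomputable def binEnt (p : ℝ) : ℝ :=
  -p * Real.logb 2 p - (1 - p) * Real.logb 2 (1 - p)

lemma binEnt_eq (p : ℝ) :
    binEnt p = (-(p * Real.log p) - (1 - p) * Real.log (1 - p)) / Real.log 2 := by
  unfold binEnt Real.logb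
  ring

lemma hasDerivAt_aux (c δ : ℝ) (h0 : 0 < δ) (h1 : δ < 1) (hd : 0 < 2 * δ + c) :
    HasDerivAt (fun x : ℝ => binEnt x / (2 * x + c))
      ((((c + 2) * Real.log (1 - δ) - c * Real.log δ) / Real.log 2) / (2 * δ + c) ^ 2) δ := by
  have hlog2 : (0:ℝ) < Real.log 2 := Real.log_pos (by norm_num)
  have hfun : (fun x : ℝ => binEnt x / (2 * x + c))
      = fun x : ℝ => ((-(x * Real.log x) - (1 - x) * Real.log (1 - x)) / Real.log 2) / (2 * x + c) := by
    funext x; rw [binEnt_eq]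
  rw [hfun]
  have h1' : HasDerivAt (fun p : ℝ => p * Real.log p) (Real.log δ + 1) δ :=
    Real.hasDerivAt_mul_log h0.ne'
  have hinner : HasDerivAt (fun p : ℝ => 1 - p) (-1) δ := by
    exact (hasDerivAt_id' δ).const_sub (1:ℝ)
  have h2 : HasDerivAt (fun p : ℝ => (1 - p) * Real.log (1 - p))
      ((Real.log (1 - δ) + 1) * (-1)) δ :=
    (Real.hasDerivAt_mul_log (by intro h; nlinarith : (1:ℝ) - δ ≠ 0)).comp δ hinner
  have hE : HasDerivAt (fun p : ℝ => -(p * Real.log p) - (1 - p) * Real.log (1 - p))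
      (-(Real.log δ + 1) - (Real.log (1 - δ) + 1) * (-1)) δ := h1'.neg.sub h2
  have hB := hE.div_const (Real.log 2)
  have hD : HasDerivAt (fun x : ℝ => 2 * x + c) 2 δ := by
    simpa using ((hasDerivAt_id δ).const_mul (2:ℝ)).add_const c
  have := hB.div hD hd.ne'
  refine this.congr_deriv ?_
  field_simp
  ring

lemma numer_pos (c δ : ℝ) (hc : 2 * Real.logb 2 (3 / 2) < c)
    (h0 : 0 < δ) (h1 : δ < 1 / 3) :
    0 < (c + 2) * Real.log (1 - δ) - c * Real.log δ := by
  have hlog2 : (0:ℝ) < Real.log 2 := Real.log_pos (by norm_num)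
  have hL : (0:ℝ) < Real.logb 2 (3 / 2) := Real.logb_pos (by norm_num) (by norm_num)
  have hc0 : (0:ℝ) < c := lt_trans (by positivity) hc
  have hkey : 2 * Real.log (3 / 2) < c * Real.log 2 := by
    have : 2 * (Real.log (3 / 2) / Real.log 2) < c := hc
    calc 2 * Real.log (3 / 2) = 2 * (Real.log (3 / 2) / Real.log 2) * Real.log 2 := by
          field_simp
      _ < c * Real.log 2 := by
          exact mul_lt_mul_of_pos_right this hlog2
  have ha : Real.log (2 / 3) < Real.log (1 - δ) :=
    Real.log_lt_log (by norm_num) (by linarith)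
  have hb : Real.log δ < Real.log (1 / 3) := Real.log_lt_log h0 (by linarith)
  have h23 : Real.log (2 / 3) = Real.log 2 - Real.log 3 :=
    Real.log_div (by norm_num) (by norm_num)
  have h13 : Real.log (1 / 3) = Real.log 1 - Real.log 3 :=
    Real.log_div (by norm_num) (by norm_num)
  have h32 : Real.log (3 / 2) = Real.log 3 - Real.log 2 :=
    Real.log_div (by norm_num) (by norm_num)
  have hA : (c + 2) * Real.log (2 / 3) < (c + 2) * Real.log (1 - δ) :=
    mul_lt_mul_of_pos_left ha (by linarith)
  have hB : c * Real.log δ < c * Real.log (1 / 3) := mul_lt_mul_of_pos_left hb hc0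
  have hlog1 : Real.log 1 = 0 := Real.log_one
  nlinarith [hA, hB]

lemma strictMono_aux (c : ℝ) (hc : 2 * Real.logb 2 (3 / 2) < c) :
    StrictMonoOn (fun δ : ℝ => binEnt δ / (2 * δ + c)) (Set.Ioc (0:ℝ) (1 / 3)) := by
  have hL : (0:ℝ) < Real.logb 2 (3 / 2) := Real.logb_pos (by norm_num) (by norm_num)
  have hc0 : (0:ℝ) < c := lt_trans (by positivity) hc
  have hlog2 : (0:ℝ) < Real.log 2 := Real.log_pos (by norm_num)
  apply strictMonoOn_of_deriv_pos (convex_Ioc _ _)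
  · intro x hx
    have h0 : 0 < x := hx.1
    have h1 : x < 1 := by have := hx.2; linarith
    exact ((hasDerivAt_aux c x h0 h1 (by linarith)).continuousAt).continuousWithinAt
  · intro x hx
    rw [interior_Ioc] at hx
    have h0 : 0 < x := hx.1
    have h13 : x < 1 / 3 := hx.2
    have h1 : x < 1 := by linarith
    rw [(hasDerivAt_aux c x h0 h1 (by linarith)).deriv]
    have hnum := numer_pos c x hc h0 h13
    positivity
theorem R_strictMono_d_two (ε : ℝ) (hε : 1 - 1 / (2 * Real.logb 2 (3 / 2)) < ε) (hε' : ε < 1) :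
    StrictMonoOn (fun δ : ℝ => binEnt δ / (2 * δ + 1 / (1 - ε))) (Set.Ioc (0:ℝ) (1 / 3)) ∧
    IsGreatest ((fun δ : ℝ => binEnt δ / (2 * δ + 1 / (1 - ε))) '' Set.Icc (0:ℝ) (1 / 3))
      (binEnt (1 / 3) / (2 * (1 / 3) + 1 / (1 - ε))) := by
  have hL : (0:ℝ) < Real.logb 2 (3 / 2) := Real.logb_pos (by norm_num) (by norm_num)
  have hεpos : (0:ℝ) < 1 - ε := by linarith
  have hc : 2 * Real.logb 2 (3 / 2) < 1 / (1 - ε) := by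
    rw [lt_div_iff₀ hεpos]
    have h1 : 1 - ε < 1 / (2 * Real.logb 2 (3 / 2)) := by linarith
    have h2 : (0:ℝ) < 2 * Real.logb 2 (3 / 2) := by positivity
    calc 2 * Real.logb 2 (3 / 2) * (1 - ε)
        < 2 * Real.logb 2 (3 / 2) * (1 / (2 * Real.logb 2 (3 / 2))) :=
          mul_lt_mul_of_pos_left h1 h2
      _ = 1 := by field_simp
  have hc0 : (0:ℝ) < 1 / (1 - ε) := by positivity
  have hmono := strictMono_aux (1 / (1 - ε)) hc
  refine ⟨hmono, ⟨⟨1/3, ⟨by norm_num, le_refl _⟩, rfl⟩, ?_⟩⟩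
  rintro y ⟨x, hx, rfl⟩
  rcases eq_or_lt_of_le hx.1 with h | h
  · -- x = 0
    have hx0 : x = 0 := h.symm
    subst hx0
    have hb0 : binEnt 0 = 0 := by simp [binEnt]
    simp only [hb0]
    have hbnn : 0 ≤ binEnt (1 / 3) := by
      have h1 : Real.logb 2 (1 / 3) ≤ 0 :=
        Real.logb_nonpos (by norm_num) (by norm_num) (by norm_num)
      have h2 : Real.logb 2 (1 - 1 / 3) ≤ 0 :=
        Real.logb_nonpos (by norm_num) (by norm_num) (by norm_num)
      unfold binEnt
      nlinarith
    have : (0:ℝ) ≤ binEnt (1 / 3) / (2 * (1 / 3) + 1 / (1 - ε)) :=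
      div_nonneg hbnn (by linarith)
    simpa using this
  · rcases eq_or_lt_of_le hx.2 with h2 | h2
    · rw [h2]
    · exact (hmono ⟨h, h2.le⟩ ⟨by norm_num, le_refl _⟩ h2).le
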